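/- If EA⁻(σ_∃) ⊆ EA⁻(σ'_∃) then σ_∃ is very weakly dominated by σ'_∃: for every environment strategy σ_∀, if Out(σ_∃, σ_∀) ∈ L then Out(σ'_∃, σ_∀) ∈ L. -/
import Mathlib


open scoped Classical

universe u v

variable {I : Type u} {O : Type v}

/-- The finite (even) history consisting of the first `n` (input, output) pairs of a word.
A word in `(Σ_I · Σ_O)^ω` is modelled as `w : ℕ → I × O`, where round `n` consists of the
input letter `(w n).1` followed by the output letter `(w n).2`. -/
def wpref (w : ℕ → I × O) (n : ℕ) : List (I × O) := (List.range n).map w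

/-- Outcomes of a controller strategy `σ : (Σ_I·Σ_O)^*·Σ_I → Σ_O`. -/
def OutC (σ : List (I × O) → I → O) : Set (ℕ → I × O) :=
  {w | ∀ n, (w n).2 = σ (wpref w n) (w n).1}

/-- Outcomes of an environment strategy `τ : (Σ_I·Σ_O)^* → Σ_I`. -/
def OutE (τ : List (I × O) → I) : Set (ℕ → I × O) :=
  {w | ∀ n, (w n).1 = τ (wpref w n)}

/-- Input projection `π_I`. -/
def inputProj (w : ℕ → I × O) : ℕ → I := fun n => (w n).1

/-- `A` is an input assumption: closed under changing output letters. -/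
def IsInputAssumption (A : Set (ℕ → I × O)) : Prop :=
  ∀ w w' : ℕ → I × O, inputProj w = inputProj w' → w ∈ A → w' ∈ A

/-- Cylinder `h·(Σ_I·Σ_O)^ω` of an even history `h`. -/
def cylE (h : List (I × O)) : Set (ℕ → I × O) := {w | wpref w h.length = h}

/-- Cylinder of a general history: an even part plus possibly a pending input letter. -/
def cylH (h : List (I × O) × Option I) : Set (ℕ → I × O) :=
  {w | wpref w h.1.length = h.1 ∧ ∀ i, h.2 = some i → (w h.1.length).1 = i}

/-- A scenario is coherent: no history is a prefix of two words of `S`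
that agree on the next input but disagree on the next output. -/
def Coherent (S : Set (ℕ → I × O)) : Prop :=
  ∀ w ∈ S, ∀ w' ∈ S, ∀ n, wpref w n = wpref w' n → (w n).1 = (w' n).1 → (w n).2 = (w' n).2

/-- The strategy `[S → σ]`: follow a word of the scenario `S` extending the current
history if one exists, and otherwise play `σ`. -/
noncomputable def shiftStrat (S : Set (ℕ → I × O))
    (σ : List (I × O) → I → O) : List (I × O) → I → O := fun h i =>
  if hex : ∃ w, w ∈ S ∧ wpref w h.length = h ∧ (w h.length).1 = i
  then (hex.choose h.length).2
  else σ h i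

/-- `EA(σ) = L ∪ ((Σ_I·Σ_O)^ω \ Out(σ))`. -/
def EA (L : Set (ℕ → I × O)) (σ : List (I × O) → I → O) : Set (ℕ → I × O) :=
  L ∪ (OutC σ)ᶜ

/-- The words doomed for `σ`: some even-length prefix extends to an outcome of `σ`,
but no outcome of `σ` extending that prefix is in `L`. -/
def Doomed (L : Set (ℕ → I × O)) (σ : List (I × O) → I → O) : Set (ℕ → I × O) :=
  {w | ∃ k, (OutC σ ∩ cylE (wpref w k)).Nonempty ∧ OutC σ ∩ cylE (wpref w k) ∩ L = ∅}

/-- `EA⁻(σ) = EA(σ) \ Doomed(σ)`. -/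
def EAminus (L : Set (ℕ → I × O)) (σ : List (I × O) → I → O) : Set (ℕ → I × O) :=
  EA L σ \ Doomed L σ

/-- `A` is sufficient for the specification `L` (for some controller strategy). -/
def Sufficient (L A : Set (ℕ → I × O)) : Prop :=
  ∃ σ : List (I × O) → I → O, OutC σ ∩ A ⊆ L

/-- `A` is output-restrictive. -/
def OutputRestrictive (A : Set (ℕ → I × O)) : Prop :=
  ∃ (h : List (I × O)) (σ : List (I × O) → I → O),
    (A ∩ cylE h).Nonempty ∧ (OutC σ ∩ cylE h).Nonempty ∧ A ∩ OutC σ ∩ cylE h = ∅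

/-- The even history of length `n` produced jointly by controller `σ` and environment `τ`. -/
def playH (σ : List (I × O) → I → O) (τ : List (I × O) → I) : ℕ → List (I × O)
  | 0 => []
  | n+1 =>
      let g := playH σ τ n
      g ++ [(τ g, σ g (τ g))]

/-- The unique joint outcome `Out(σ, τ)`. -/
def play (σ : List (I × O) → I → O) (τ : List (I × O) → I) : ℕ → I × O := fun n =>
  let g := playH σ τ n
  (τ g, σ g (τ g))

/-- History construction when the controller follows `σ` against the fixed input word `u`. -/
def playIH (σ : List (I × O) → I → O) (u : ℕ → I) : ℕ → List (I × O)
  | 0 => []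
  | n+1 =>
      let g := playIH σ u n
      g ++ [(u n, σ g (u n))]

/-- The unique outcome `Out(σ, u)` of `σ` against the input word `u`. -/
def playI (σ : List (I × O) → I → O) (u : ℕ → I) : ℕ → I × O := fun n =>
  (u n, σ (playIH σ u n) (u n))

/-- Outcomes extending the history `h` and following `σ` afterwards, `Out_h(σ)`. -/
def OutFrom (σ : List (I × O) → I → O) (h : List (I × O) × Option I) :
    Set (ℕ → I × O) :=
  {w | wpref w h.1.length = h.1 ∧ (∀ i, h.2 = some i → (w h.1.length).1 = i) ∧
       ∀ n, h.1.length ≤ n → (w n).2 = σ (wpref w n) (w n).1}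

/-- Even histories extending the finite history `b`, following `σ` and `τ`. -/
def extH (σ : List (I × O) → I → O) (τ : List (I × O) → I)
    (b : List (I × O)) : ℕ → List (I × O)
  | 0 => b
  | n+1 =>
      let g := extH σ τ b n
      g ++ [(τ g, σ g (τ g))]

/-- The unique word extending `b` and following `σ` and `τ` afterwards. -/
def extPlay (σ : List (I × O) → I → O) (τ : List (I × O) → I)
    (b : List (I × O)) : ℕ → I × O := fun n =>
  if hn : n < b.length then b.get ⟨n, hn⟩
  else
    let g := extH σ τ b (n - b.length)
    (τ g, σ g (τ g))

/-- The even history obtained from the general history `h`, letting `σ` answer a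
pending input letter if there is one. -/
def histBase (σ : List (I × O) → I → O) (h : List (I × O) × Option I) :
    List (I × O) :=
  match h.2 with
  | none => h.1
  | some i => h.1 ++ [(i, σ h.1 i)]

/-- `Out_h(σ, τ)`: the unique word extending `h`, following `σ` and `τ` afterwards. -/
def playFrom (σ : List (I × O) → I → O) (τ : List (I × O) → I)
    (h : List (I × O) × Option I) : ℕ → I × O :=
  extPlay σ τ (histBase σ h)

/-- `σ` is strongly winning for `L`. -/
def StronglyWinning (L : Set (ℕ → I × O)) (σ : List (I × O) → I → O) : Prop :=
  ∀ h : List (I × O) × Option I,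
    (∃ σ' : List (I × O) → I → O, (OutC σ' ∩ cylH h).Nonempty ∧ OutC σ' ∩ cylH h ⊆ L) →
    OutC σ ∩ cylH h ⊆ L

/-- `σ` is subgame winning for `L`. -/
def SubgameWinning (L : Set (ℕ → I × O)) (σ : List (I × O) → I → O) : Prop :=
  ∀ h : List (I × O) × Option I,
    (∃ σ' : List (I × O) → I → O, OutFrom σ' h ⊆ L) → OutFrom σ h ⊆ L

lemma wpref_succ (w : ℕ → I × O) (n : ℕ) :
    wpref w (n+1) = wpref w n ++ [w n] := by
  simp [wpref, List.range_succ]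

lemma wpref_length (w : ℕ → I × O) (n : ℕ) : (wpref w n).length = n := by
  simp [wpref]

lemma wpref_play (σ : List (I × O) → I → O) (τ : List (I × O) → I) (n : ℕ) :
    wpref (play σ τ) n = playH σ τ n := by
  induction n with
  | zero => simp [wpref, playH]
  | succ n ih => rw [wpref_succ, ih]; rfl

lemma play_mem_OutC (σ : List (I × O) → I → O) (τ : List (I × O) → I) :
    play σ τ ∈ OutC σ := by
  intro n; rw [wpref_play]; rfl

lemma play_mem_OutE (σ : List (I × O) → I → O) (τ : List (I × O) → I) :
    play σ τ ∈ OutE τ := by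
  intro n; rw [wpref_play]; rfl

lemma play_unique (σ : List (I × O) → I → O) (τ : List (I × O) → I)
    (v : ℕ → I × O) (hC : v ∈ OutC σ) (hE : v ∈ OutE τ) : v = play σ τ := by
  have key : ∀ n, wpref v n = playH σ τ n ∧ v n = play σ τ n := by
    intro n
    induction n with
    | zero =>
      have hw : wpref v 0 = playH σ τ 0 := by simp [wpref, playH]
      refine ⟨hw, ?_⟩
      have h1 := hE 0
      have h2 := hC 0
      refine Prod.ext ?_ ?_
      · rw [h1, hw]; rfl
      · rw [h2, h1, hw]; rfl
    | succ n ih =>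
      have hw : wpref v (n+1) = playH σ τ (n+1) := by
        rw [wpref_succ, ih.1, ih.2]; rfl
      refine ⟨hw, ?_⟩
      have h1 := hE (n+1)
      have h2 := hC (n+1)
      refine Prod.ext ?_ ?_
      · rw [h1, hw]; rfl
      · rw [h2, h1, hw]; rfl
  funext n; exact (key n).2

lemma wpref_mono {v u : ℕ → I × O} {k : ℕ} (h : wpref v k = wpref u k)
    {n : ℕ} (hn : n ≤ k) : wpref v n = wpref u n := by
  have key : ∀ w : ℕ → I × O, wpref w n = (wpref w k).take n := by
    intro w
    simp [wpref, ← List.map_take, List.take_range, Nat.min_eq_left hn]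
  rw [key v, key u, h]

lemma wpref_apply {v u : ℕ → I × O} {k : ℕ} (h : wpref v k = wpref u k)
    {n : ℕ} (hn : n < k) : v n = u n := by
  have h1 : wpref v (n+1) = wpref u (n+1) := wpref_mono h hn
  have h0 : wpref v n = wpref u n := wpref_mono h (le_of_lt hn)
  rw [wpref_succ, wpref_succ, h0] at h1
  simpa using h1

/-- if `EA⁻(σ) ⊆ EA⁻(σ')` then `σ` is very weakly dominated by `σ'`. -/
theorem EAminus_subset_implies_vwd
    (L : Set (ℕ → I × O)) (σ σ' : List (I × O) → I → O)
    (hsub : EAminus L σ ⊆ EAminus L σ') :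
    ∀ τ : List (I × O) → I, play σ τ ∈ L → play σ' τ ∈ L := by
  intro τ hw
  by_contra hw'
  set w := play σ τ with hwdef
  set w' := play σ' τ with hw'def
  have hw'OutC : w' ∈ OutC σ' := play_mem_OutC σ' τ
  have hw'OutE : w' ∈ OutE τ := play_mem_OutE σ' τ
  have hwOutC : w ∈ OutC σ := play_mem_OutC σ τ
  -- w' is not in EA⁻(σ')
  have hnot : w' ∉ EAminus L σ := by
    intro hmem
    rcases (hsub hmem).1 with h | h
    · exact hw' h
    · exact h hw'OutC
  by_cases hC : w' ∈ OutC σ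
  · -- then w' = w, contradiction
    have : w' = w := play_unique σ τ w' hC hw'OutE
    exact hw' (this ▸ hw)
  · -- then w' ∈ EA L σ, hence w' ∈ Doomed L σ
    have hEA : w' ∈ EA L σ := Or.inr hC
    have hD : w' ∈ Doomed L σ := by
      by_contra hD
      exact hnot ⟨hEA, hD⟩
    obtain ⟨k, hne, hemp⟩ := hD
    -- w ≠ w'
    have hneq : ∃ n, w n ≠ w' n := by
      by_contra h
      push_neg at h
      exact hw' ((funext h : w = w') ▸ hw)
    set m := Nat.find hneq with hmdef
    have hm : w m ≠ w' m := Nat.find_spec hneq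
    have hlt : ∀ j < m, w j = w' j := fun j hj => not_not.mp (Nat.find_min hneq hj)
    have hpref : ∀ n ≤ m, wpref w n = wpref w' n := by
      intro n hn
      apply List.map_congr_left
      intro j hj
      exact hlt j (lt_of_lt_of_le (List.mem_range.mp hj) hn)
    have hin : (w m).1 = (w' m).1 := by
      have h1 : (w m).1 = τ (wpref w m) := play_mem_OutE σ τ m
      have h2 : (w' m).1 = τ (wpref w' m) := hw'OutE m
      rw [h1, h2, hpref m le_rfl]
    have hout : (w m).2 ≠ (w' m).2 := fun h => hm (Prod.ext hin h)
    rcases le_or_gt k m with hk | hk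
    · -- w itself is a σ-outcome extending wpref w' k, in L
      have hcyl : w ∈ cylE (wpref w' k) := by
        show wpref w (wpref w' k).length = wpref w' k
        rw [wpref_length]
        exact hpref k hk
      have : w ∈ OutC σ ∩ cylE (wpref w' k) ∩ L := ⟨⟨hwOutC, hcyl⟩, hw⟩
      rw [hemp] at this
      exact this
    · -- no σ-outcome extends wpref w' k
      obtain ⟨v, hvC, hvcyl⟩ := hne
      have hvk : wpref v k = wpref w' k := by
        have := hvcyl
        rwa [show cylE (wpref w' k) = {u | wpref u (wpref w' k).length = wpref w' k} from rfl,
          Set.mem_setOf_eq, wpref_length] at this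
      have hvm : wpref v m = wpref w' m := wpref_mono hvk (le_of_lt hk)
      have hvem : v m = w' m := wpref_apply hvk hk
      have h2 : (v m).2 = σ (wpref v m) ((v m).1) := hvC m
      have h3 : (w m).2 = σ (wpref w m) ((w m).1) := hwOutC m
      apply hout
      rw [h3, ← hvem, h2, hvm, hpref m le_rfl, hin, hvem]
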